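/- Let n ≥ 2, let μ be a finite Borel measure on ℝⁿ, and let g : ℝⁿ → ℝ satisfy g(x) = ∫_{ℝⁿ} cos⟨ξ, x⟩ dμ(ξ) and ∫_{ℝⁿ} sin⟨ξ, x⟩ dμ(ξ) = 0 for all x ∈ ℝⁿ. If Ω ⊆ ℝⁿ is a bounded measurable set with ∬_{Ω×Ω} g(x−y) dx dy = 0, then χ̂_Ω(ξ) = 0 for every ξ in the topological support of μ. In particular, if Ω is nonempty and open then 0 does not lie in the support of μ (since χ̂_Ω(0) equals the Lebesgue measure of Ω, which is positive). -/

import Mathlib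

/-!
Expanding `g` and interchanging the integrals (all integrands are bounded and all measures finite)
turns `∬_{Ω×Ω} g(x - y)` into `∫ |χ̂_Ω(ξ)|² dμ(ξ)`, since
`cos⟨ξ, x - y⟩ = cos⟨ξ, x⟩ cos⟨ξ, y⟩ + sin⟨ξ, x⟩ sin⟨ξ, y⟩`. Hence the continuous nonnegative
function `|χ̂_Ω|²` vanishes `μ`-a.e., so everywhere on the support of `μ`. Here `χ̂_Ω` is the
characteristic function `charFun` of Lebesgue measure restricted to `Ω`.
-/

open MeasureTheory
open scoped RealInnerProductSpace

theorem Continuous.eqOn_support_of_ae_eq {X Y : Type*} [TopologicalSpace X] [MeasurableSpace X]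
    [TopologicalSpace Y] [T2Space Y] {μ : Measure X} {f g : X → Y} (hf : Continuous f)
    (hg : Continuous g) (h : f =ᵐ[μ] g) : Set.EqOn f g μ.support := fun _ hx => by
  by_contra hne
  exact Measure.subset_compl_support_of_isOpen (isOpen_ne_fun hf hg) (ae_iff.mp h) hne hx

theorem integral_integral_integral_swap {α β γ E : Type*} [MeasurableSpace α] [MeasurableSpace β]
    [MeasurableSpace γ] [NormedAddCommGroup E] [NormedSpace ℝ E] {μ : Measure α} {ν : Measure β}
    {ρ : Measure γ} [SFinite μ] [SFinite ν] [SFinite ρ] {f : α → β → γ → E}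
    (hf : Integrable (fun p : (α × β) × γ => f p.1.1 p.1.2 p.2) ((μ.prod ν).prod ρ)) :
    ∫ x, ∫ y, ∫ z, f x y z ∂ρ ∂ν ∂μ = ∫ z, ∫ x, ∫ y, f x y z ∂ν ∂μ ∂ρ :=
  calc ∫ x, ∫ y, ∫ z, f x y z ∂ρ ∂ν ∂μ = ∫ p, ∫ z, f p.1 p.2 z ∂ρ ∂μ.prod ν :=
        (integral_prod _ hf.integral_prod_left).symm
    _ = ∫ z, ∫ p, f p.1 p.2 z ∂μ.prod ν ∂ρ := integral_integral_swap hf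
    _ = ∫ z, ∫ x, ∫ y, f x y z ∂ν ∂μ ∂ρ :=
        integral_congr_ae (hf.prod_left_ae.mono fun _ hz => integral_prod _ hz)

section

variable {E : Type*} [NormedAddCommGroup E] [InnerProductSpace ℝ E] [MeasurableSpace E]
  [BorelSpace E]

theorem integrable_cos_inner (ν : Measure E) [IsFiniteMeasure ν] (ξ : E) :
    Integrable (fun x => Real.cos ⟪ξ, x⟫) ν :=
  .of_bound (by fun_prop : Continuous _).aestronglyMeasurable 1
    (ae_of_all _ fun _ => Real.abs_cos_le_one _)

theorem integrable_sin_inner (ν : Measure E) [IsFiniteMeasure ν] (ξ : E) :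
    Integrable (fun x => Real.sin ⟪ξ, x⟫) ν :=
  .of_bound (by fun_prop : Continuous _).aestronglyMeasurable 1
    (ae_of_all _ fun _ => Real.abs_sin_le_one _)

theorem charFun_eq_integral_cos_add_integral_sin_mul_I (ν : Measure E) [IsFiniteMeasure ν]
    (ξ : E) :
    charFun ν ξ = ↑(∫ x, Real.cos ⟪ξ, x⟫ ∂ν) + ↑(∫ x, Real.sin ⟪ξ, x⟫ ∂ν) * Complex.I := by
  simp_rw [charFun_apply, real_inner_comm ξ, Complex.exp_mul_I, ← Complex.ofReal_cos,
    ← Complex.ofReal_sin]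
  rw [integral_add (integrable_cos_inner ν ξ).ofReal
    ((integrable_sin_inner ν ξ).ofReal.mul_const _), integral_mul_const,
    integral_complex_ofReal, integral_complex_ofReal]

theorem integral_integral_cos_inner_sub (ν : Measure E) [IsFiniteMeasure ν] (ξ : E) :
    ∫ x, ∫ y, Real.cos ⟪ξ, x - y⟫ ∂ν ∂ν = ‖charFun ν ξ‖ ^ 2 := by
  have hcos := integrable_cos_inner ν ξ
  have hsin := integrable_sin_inner ν ξ
  rw [charFun_eq_integral_cos_add_integral_sin_mul_I, Complex.sq_norm, Complex.normSq_add_mul_I]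
  simp_rw [inner_sub_right, Real.cos_sub, integral_add (hcos.const_mul _) (hsin.const_mul _),
    integral_const_mul]
  rw [integral_add (hcos.mul_const _) (hsin.mul_const _), integral_mul_const, integral_mul_const]
  ring

variable [SecondCountableTopology E]

theorem integral_integral_integral_cos_inner_sub (μ ν : Measure E) [IsFiniteMeasure μ]
    [IsFiniteMeasure ν] :
    ∫ x, ∫ y, ∫ ξ, Real.cos ⟪ξ, x - y⟫ ∂μ ∂ν ∂ν = ∫ ξ, ‖charFun ν ξ‖ ^ 2 ∂μ := by
  rw [integral_integral_integral_swap]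
  · simp_rw [integral_integral_cos_inner_sub]
  · exact .of_bound (by fun_prop : Continuous _).aestronglyMeasurable 1
      (ae_of_all _ fun _ => Real.abs_cos_le_one _)

theorem charFun_eq_zero_of_mem_support {μ ν : Measure E} [IsFiniteMeasure μ] [IsFiniteMeasure ν]
    (h : ∫ x, ∫ y, ∫ ξ, Real.cos ⟪ξ, x - y⟫ ∂μ ∂ν ∂ν = 0) {ξ : E} (hξ : ξ ∈ μ.support) :
    charFun ν ξ = 0 := by
  rw [integral_integral_integral_cos_inner_sub] at h
  have hint : Integrable (fun ξ => ‖charFun ν ξ‖ ^ 2) μ :=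
    .of_bound (by fun_prop : Continuous _).aestronglyMeasurable (ν.real Set.univ ^ 2)
      (ae_of_all _ fun ξ => by
        rw [norm_pow, norm_norm]
        exact pow_le_pow_left₀ (norm_nonneg _) (norm_charFun_le ξ) 2)
  have hae := (integral_eq_zero_iff_of_nonneg (fun _ => by positivity) hint).mp h
  have hξ0 : ‖charFun ν ξ‖ ^ 2 = 0 :=
    Continuous.eqOn_support_of_ae_eq (by fun_prop) continuous_zero hae hξ
  simpa using hξ0

end

theorem stmt_15_general {n : ℕ} (μ : Measure (EuclideanSpace ℝ (Fin n)))
    [IsFiniteMeasure μ] (g : EuclideanSpace ℝ (Fin n) → ℝ)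
    (hg : ∀ x, g x = ∫ ξ, Real.cos ⟪ξ, x⟫ ∂μ)
    (Ω : Set (EuclideanSpace ℝ (Fin n)))
    (hbdd : Bornology.IsBounded Ω)
    (hF : (∫ x in Ω, ∫ y in Ω, g (x - y)) = 0) :
    (∀ ξ : EuclideanSpace ℝ (Fin n),
      (∀ U : Set (EuclideanSpace ℝ (Fin n)), IsOpen U → ξ ∈ U → 0 < μ U) →
        (∫ x in Ω, Complex.exp ((⟪ξ, x⟫ : ℂ) * Complex.I)) = 0) ∧
    (Ω.Nonempty → IsOpen Ω →
      ¬ ∀ U : Set (EuclideanSpace ℝ (Fin n)), IsOpen U →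
        (0 : EuclideanSpace ℝ (Fin n)) ∈ U → 0 < μ U) := by
  have : IsFiniteMeasure (volume.restrict Ω) := isFiniteMeasure_restrict.2 hbdd.measure_lt_top.ne
  simp_rw [hg] at hF
  have hvanish {ξ} (hξ : ∀ U, IsOpen U → ξ ∈ U → 0 < μ U) : charFun (volume.restrict Ω) ξ = 0 :=
    charFun_eq_zero_of_mem_support hF <| by
      rw [Measure.support_eq_forall_isOpen]
      exact fun U hξU hU => hξ U hU hξU
  refine ⟨fun ξ hξ => ?_, fun hne hopen h0 => ?_⟩
  · simpa only [charFun_apply, real_inner_comm ξ] using hvanish hξ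
  · have hΩ := hvanish h0
    rw [charFun_zero, measureReal_restrict_apply_univ, Complex.ofReal_eq_zero,
      measureReal_eq_zero_iff hbdd.measure_lt_top.ne] at hΩ
    exact (hopen.measure_pos volume hne).ne' hΩ

theorem stmt_15 {n : ℕ} (hn : 2 ≤ n) (μ : Measure (EuclideanSpace ℝ (Fin n)))
    [IsFiniteMeasure μ] (g : EuclideanSpace ℝ (Fin n) → ℝ)
    (hg : ∀ x, g x = ∫ ξ, Real.cos ⟪ξ, x⟫ ∂μ)
    (hsin : ∀ x, (∫ ξ, Real.sin ⟪ξ, x⟫ ∂μ) = 0)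
    (Ω : Set (EuclideanSpace ℝ (Fin n))) (hmeas : MeasurableSet Ω)
    (hbdd : Bornology.IsBounded Ω)
    (hF : (∫ x in Ω, ∫ y in Ω, g (x - y)) = 0) :
    (∀ ξ : EuclideanSpace ℝ (Fin n),
      (∀ U : Set (EuclideanSpace ℝ (Fin n)), IsOpen U → ξ ∈ U → 0 < μ U) →
        (∫ x in Ω, Complex.exp ((⟪ξ, x⟫ : ℂ) * Complex.I)) = 0) ∧
    (Ω.Nonempty → IsOpen Ω →
      ¬ ∀ U : Set (EuclideanSpace ℝ (Fin n)), IsOpen U →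
        (0 : EuclideanSpace ℝ (Fin n)) ∈ U → 0 < μ U) :=
  stmt_15_general μ g hg Ω hbdd hF
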